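/- arXiv:2302.00808 — 5 statements merged into one kernel-verified Lean document; each statement's English description precedes it below -/
import Mathlib

section
/- For any two stationary policies π and π' on a finite unichain MDP with average rewards J(π), J(π') and average-reward advantage function Ā^π, the performance difference satisfies J(π') − J(π) = E_{s∼d_{π'}, a∼π'}[Ā^π(s,a)], where d_{π'} is the stationary state distribution of π'. -/
open Finset

/-- Performance difference lemma for average-reward unichain MDPs:
`J(π') − J(π) = E_{s∼d_{π'}, a∼π'}[Ā^π(s,a)]`. -/
theorem stmt_0 {S A : Type*} [Fintype S] [Fintype A]
    (P : S → A → S → ℝ) (r : S → A → S → ℝ)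
    (π π' : S → A → ℝ) (d' : S → ℝ)
    (hPnn : ∀ s a s', 0 ≤ P s a s') (hP : ∀ s a, ∑ s', P s a s' = 1)
    (hπnn : ∀ s a, 0 ≤ π s a) (hπ : ∀ s, ∑ a, π s a = 1)
    (hπ'nn : ∀ s a, 0 ≤ π' s a) (hπ' : ∀ s, ∑ a, π' s a = 1)
    (hd'nn : ∀ s, 0 ≤ d' s) (hd'sum : ∑ s, d' s = 1)
    -- d' is the stationary distribution of the chain induced by π'
    (hd'stat : ∀ s', ∑ s, d' s * ∑ a, π' s a * P s a s' = d' s')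
    (J J' : ℝ)
    -- average rewards of π and π'
    (hJ' : J' = ∑ s, d' s * ∑ a, π' s a * ∑ s', P s a s' * r s a s')
    (V : S → ℝ)
    -- average-reward Bellman equation for the bias of π (pins down J as J(π))
    (hV : ∀ s, V s = ∑ a, π s a * ∑ s', P s a s' * (r s a s' - J + V s'))
    (Q : S → A → ℝ)
    (hQ : ∀ s a, Q s a = ∑ s', P s a s' * (r s a s' - J + V s'))
    (Adv : S → A → ℝ)
    (hA : ∀ s a, Adv s a = Q s a - V s) :
    J' - J = ∑ s, d' s * ∑ a, π' s a * Adv s a := by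
  have hQ' : ∀ s a, Q s a = (∑ s', P s a s' * r s a s') - J + ∑ s', P s a s' * V s' := by
    intro s a
    rw [hQ]
    calc ∑ s', P s a s' * (r s a s' - J + V s')
        = ∑ s', (P s a s' * r s a s' - P s a s' * J + P s a s' * V s') :=
          Finset.sum_congr rfl (fun s' _ => by ring)
      _ = (∑ s', P s a s' * r s a s') - (∑ s', P s a s') * J + ∑ s', P s a s' * V s' := by
          rw [Finset.sum_add_distrib, Finset.sum_sub_distrib, Finset.sum_mul]
      _ = (∑ s', P s a s' * r s a s') - J + ∑ s', P s a s' * V s' := by rw [hP]; ring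
  have hinner : ∀ s, ∑ a, π' s a * Adv s a
      = (∑ a, π' s a * ∑ s', P s a s' * r s a s') - J
        + (∑ a, π' s a * ∑ s', P s a s' * V s') - V s := by
    intro s
    calc ∑ a, π' s a * Adv s a
        = ∑ a, (π' s a * (∑ s', P s a s' * r s a s') - π' s a * J
            + π' s a * (∑ s', P s a s' * V s') - π' s a * V s) :=
          Finset.sum_congr rfl (fun a _ => by rw [hA, hQ']; ring)
      _ = (∑ a, π' s a * ∑ s', P s a s' * r s a s') - (∑ a, π' s a) * J
            + (∑ a, π' s a * ∑ s', P s a s' * V s') - (∑ a, π' s a) * V s := by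
          rw [Finset.sum_sub_distrib, Finset.sum_add_distrib, Finset.sum_sub_distrib,
            Finset.sum_mul, Finset.sum_mul]
      _ = _ := by rw [hπ']; ring
  have hX : ∑ s, d' s * ∑ a, π' s a * ∑ s', P s a s' * V s' = ∑ s, d' s * V s := by
    calc ∑ s, d' s * ∑ a, π' s a * ∑ s', P s a s' * V s'
        = ∑ s, ∑ a, ∑ s', d' s * (π' s a * P s a s') * V s' := by
          refine Finset.sum_congr rfl fun s _ => ?_
          rw [Finset.mul_sum]
          refine Finset.sum_congr rfl fun a _ => ?_
          rw [Finset.mul_sum, Finset.mul_sum]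
          exact Finset.sum_congr rfl fun s' _ => by ring
      _ = ∑ s, ∑ s', ∑ a, d' s * (π' s a * P s a s') * V s' :=
          Finset.sum_congr rfl fun s _ => Finset.sum_comm
      _ = ∑ s', ∑ s, ∑ a, d' s * (π' s a * P s a s') * V s' := Finset.sum_comm
      _ = ∑ s', (∑ s, d' s * ∑ a, π' s a * P s a s') * V s' := by
          refine Finset.sum_congr rfl fun s' _ => ?_
          rw [Finset.sum_mul]
          refine Finset.sum_congr rfl fun s _ => ?_
          rw [Finset.mul_sum, Finset.sum_mul]
      _ = ∑ s', d' s' * V s' := by simp_rw [hd'stat]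
  calc J' - J = (∑ s, d' s * ((∑ a, π' s a * ∑ s', P s a s' * r s a s') - J
        + (∑ a, π' s a * ∑ s', P s a s' * V s') - V s)) := by
        have : ∀ s, d' s * ((∑ a, π' s a * ∑ s', P s a s' * r s a s') - J
            + (∑ a, π' s a * ∑ s', P s a s' * V s') - V s)
          = d' s * (∑ a, π' s a * ∑ s', P s a s' * r s a s') - d' s * J
            + d' s * (∑ a, π' s a * ∑ s', P s a s' * V s') - d' s * V s := fun s => by ring
        simp_rw [this]
        rw [Finset.sum_sub_distrib, Finset.sum_add_distrib, Finset.sum_sub_distrib,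
          ← Finset.sum_mul, hd'sum, hX, hJ']
        ring
    _ = ∑ s, d' s * ∑ a, π' s a * Adv s a :=
        Finset.sum_congr rfl fun s _ => by rw [hinner]
end

section
/- For any two stationary policies π and π' on a finite unichain MDP, |J(π') − J(π) − E_{s∼d_π, a∼π'}[Ā^π(s,a)]| ≤ 2ε·D_TV(d_{π'} ∥ d_π), where ε = max_s |E_{a∼π'}[Ā^π(s,a)]| and D_TV(p∥q) = (1/2)∑_s |p(s) − q(s)|. -/
open Finset

/-- `|J(π') − J(π) − E_{s∼d_π, a∼π'}[Ā^π(s,a)]| ≤ 2ε·D_TV(d_{π'}∥d_π)` with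
`ε = max_s |E_{a∼π'}[Ā^π(s,a)]|`. -/
theorem stmt_1 {S A : Type*} [Fintype S] [Fintype A] [Nonempty S]
    (P : S → A → S → ℝ) (r : S → A → S → ℝ)
    (π π' : S → A → ℝ) (d d' : S → ℝ)
    (hPnn : ∀ s a s', 0 ≤ P s a s') (hP : ∀ s a, ∑ s', P s a s' = 1)
    (hπnn : ∀ s a, 0 ≤ π s a) (hπ : ∀ s, ∑ a, π s a = 1)
    (hπ'nn : ∀ s a, 0 ≤ π' s a) (hπ' : ∀ s, ∑ a, π' s a = 1)
    (hdnn : ∀ s, 0 ≤ d s) (hdsum : ∑ s, d s = 1)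
    (hd'nn : ∀ s, 0 ≤ d' s) (hd'sum : ∑ s, d' s = 1)
    -- d, d' are the stationary distributions of the chains induced by π, π'
    (hdstat : ∀ s', ∑ s, d s * ∑ a, π s a * P s a s' = d s')
    (hd'stat : ∀ s', ∑ s, d' s * ∑ a, π' s a * P s a s' = d' s')
    (J J' : ℝ)
    (hJ' : J' = ∑ s, d' s * ∑ a, π' s a * ∑ s', P s a s' * r s a s')
    (V : S → ℝ)
    (hV : ∀ s, V s = ∑ a, π s a * ∑ s', P s a s' * (r s a s' - J + V s'))
    (Q : S → A → ℝ)
    (hQ : ∀ s a, Q s a = ∑ s', P s a s' * (r s a s' - J + V s'))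
    (Adv : S → A → ℝ)
    (hA : ∀ s a, Adv s a = Q s a - V s)
    (ε : ℝ)
    (hε : ε = ⨆ s, |∑ a, π' s a * Adv s a|) :
    |J' - J - ∑ s, d s * ∑ a, π' s a * Adv s a| ≤
      2 * ε * ((1 / 2) * ∑ s, |d' s - d s|) := by

  set g : S → ℝ := fun s => ∑ a, π' s a * Adv s a with hg
  -- pointwise bound
  have hεnn : ∀ s, |g s| ≤ ε := by
    intro s
    rw [hε]
    exact le_ciSup (f := fun s : S => |∑ a, π' s a * Adv s a|)
      (Set.Finite.bddAbove (Set.finite_range _)) s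
  -- rewrite Q
  have hQ' : ∀ s a, Q s a = (∑ s', P s a s' * r s a s') - J + ∑ s', P s a s' * V s' := by
    intro s a
    rw [hQ]
    simp only [mul_sub, mul_add, Finset.sum_add_distrib, Finset.sum_sub_distrib,
      ← Finset.sum_mul, hP s a, one_mul]
  -- pointwise expansion of g
  have hg_eq : ∀ s, g s = (∑ a, π' s a * ∑ s', P s a s' * r s a s') - J
      + (∑ a, π' s a * ∑ s', P s a s' * V s') - V s := by
    intro s
    simp only [hg, hA, hQ']
    simp only [mul_sub, mul_add, Finset.sum_add_distrib, Finset.sum_sub_distrib,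
      ← Finset.sum_mul, hπ' s, one_mul]
  have T_eq : ∑ s, d' s * ∑ a, π' s a * ∑ s', P s a s' * V s' = ∑ s', d' s' * V s' := by
    calc ∑ s, d' s * ∑ a, π' s a * ∑ s', P s a s' * V s'
        = ∑ s, ∑ a, ∑ s', d' s * (π' s a * (P s a s' * V s')) := by
          simp [Finset.mul_sum]
      _ = ∑ s, ∑ s', ∑ a, d' s * (π' s a * (P s a s' * V s')) := by
          exact Finset.sum_congr rfl fun s _ => Finset.sum_comm
      _ = ∑ s', ∑ s, ∑ a, d' s * (π' s a * (P s a s' * V s')) := Finset.sum_comm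
      _ = ∑ s', (∑ s, d' s * ∑ a, π' s a * P s a s') * V s' := by
          apply Finset.sum_congr rfl
          intro s' _
          simp only [Finset.sum_mul, Finset.mul_sum]
          exact Finset.sum_congr rfl fun _ _ => Finset.sum_congr rfl fun _ _ => by ring
      _ = ∑ s', d' s' * V s' := by simp [hd'stat]
  -- performance difference lemma
  have key : ∑ s, d' s * g s = J' - J := by
    calc ∑ s, d' s * g s
        = ∑ s, (d' s * ∑ a, π' s a * ∑ s', P s a s' * r s a s' - d' s * J
            + d' s * ∑ a, π' s a * ∑ s', P s a s' * V s' - d' s * V s) := by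
          apply Finset.sum_congr rfl
          intro s _
          rw [hg_eq s]
          ring
      _ = J' - J + (∑ s, d' s * ∑ a, π' s a * ∑ s', P s a s' * V s')
            - ∑ s, d' s * V s := by
          simp only [Finset.sum_add_distrib, Finset.sum_sub_distrib,
            ← Finset.sum_mul, hJ', ← Finset.mul_sum]
          rw [hd'sum]
          ring
      _ = J' - J := by rw [T_eq]; ring
  have hmain : J' - J - ∑ s, d s * g s = ∑ s, (d' s - d s) * g s := by
    rw [← key]
    simp [sub_mul, Finset.sum_sub_distrib]
  rw [hmain]
  calc |∑ s, (d' s - d s) * g s| ≤ ∑ s, |(d' s - d s) * g s| := Finset.abs_sum_le_sum_abs _ _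
    _ ≤ ∑ s, |d' s - d s| * ε := by
        apply Finset.sum_le_sum
        intro s _
        rw [abs_mul]
        exact mul_le_mul_of_nonneg_left (hεnn s) (abs_nonneg _)
    _ = 2 * ε * ((1 / 2) * ∑ s, |d' s - d s|) := by
        rw [← Finset.sum_mul]
        ring
end

section
/- (Two-sided surrogate bound) For any policies π, π' on a finite ergodic MDP, L⁻ ≤ J(π') − J(π) ≤ L⁺, where L± = E_{s∼d_π, a∼π'}[Ā^π(s,a)] ± 2ν·E_{s∼d_π}[D_TV(π'∥π)[s]], ν = σ★·max_s |E_{a∼π'}[Ā^π(s,a)]|, provided D_TV(d_{π'} ∥ d_π) ≤ σ★·E_{s∼d_π}[D_TV(π'∥π)[s]]. -/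
open Finset

/-- Two-sided surrogate bound: `L⁻ ≤ J(π') − J(π) ≤ L⁺` with
`L± = E_{s∼d_π, a∼π'}[Ā^π] ± 2ν·E_{s∼d_π}[D_TV(π'∥π)[s]]`,
`ν = σ★·max_s |E_{a∼π'}[Ā^π(s,a)]|`, provided the stationary-distribution
sensitivity bound `D_TV(d_{π'}∥d_π) ≤ σ★·E_{s∼d_π}[D_TV(π'∥π)[s]]` holds. -/
theorem stmt_4 {S A : Type*} [Fintype S] [Fintype A] [Nonempty S]
    (P : S → A → S → ℝ) (r : S → A → S → ℝ)
    (π π' : S → A → ℝ) (d d' : S → ℝ)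
    (hPnn : ∀ s a s', 0 ≤ P s a s') (hP : ∀ s a, ∑ s', P s a s' = 1)
    (hπnn : ∀ s a, 0 ≤ π s a) (hπ : ∀ s, ∑ a, π s a = 1)
    (hπ'nn : ∀ s a, 0 ≤ π' s a) (hπ' : ∀ s, ∑ a, π' s a = 1)
    (hdnn : ∀ s, 0 ≤ d s) (hdsum : ∑ s, d s = 1)
    (hd'nn : ∀ s, 0 ≤ d' s) (hd'sum : ∑ s, d' s = 1)
    (hdstat : ∀ s', ∑ s, d s * ∑ a, π s a * P s a s' = d s')
    (hd'stat : ∀ s', ∑ s, d' s * ∑ a, π' s a * P s a s' = d' s')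
    (J J' : ℝ)
    (hJ' : J' = ∑ s, d' s * ∑ a, π' s a * ∑ s', P s a s' * r s a s')
    (V : S → ℝ)
    (hV : ∀ s, V s = ∑ a, π s a * ∑ s', P s a s' * (r s a s' - J + V s'))
    (Q : S → A → ℝ)
    (hQ : ∀ s a, Q s a = ∑ s', P s a s' * (r s a s' - J + V s'))
    (Adv : S → A → ℝ)
    (hA : ∀ s a, Adv s a = Q s a - V s)
    (σstar ν : ℝ) (hσnn : 0 ≤ σstar)
    (hν : ν = σstar * ⨆ s, |∑ a, π' s a * Adv s a|)
    -- sensitivity bound on stationary distributions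
    (hsens : (1 / 2) * ∑ s, |d' s - d s| ≤
      σstar * ∑ s, d s * ((1 / 2) * ∑ a, |π' s a - π s a|)) :
    (∑ s, d s * ∑ a, π' s a * Adv s a)
        - 2 * ν * ∑ s, d s * ((1 / 2) * ∑ a, |π' s a - π s a|) ≤ J' - J ∧
    J' - J ≤ (∑ s, d s * ∑ a, π' s a * Adv s a)
        + 2 * ν * ∑ s, d s * ((1 / 2) * ∑ a, |π' s a - π s a|) := by
  set g : S → ℝ := fun s => ∑ a, π' s a * Adv s a with hg
  -- expand g
  have hgexp : ∀ s, g s = (∑ a, π' s a * ∑ s', P s a s' * r s a s') - J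
      + (∑ a, π' s a * ∑ s', P s a s' * V s') - V s := by
    intro s
    have h0 : g s = (∑ a, π' s a * Q s a) - V s := by
      simp only [hg, hA, mul_sub, Finset.sum_sub_distrib, ← Finset.sum_mul, hπ' s, one_mul]
    rw [h0]
    have hQ' : ∀ a, π' s a * Q s a
        = π' s a * (∑ s', P s a s' * r s a s') - π' s a * J
          + π' s a * (∑ s', P s a s' * V s') := by
      intro a
      rw [hQ]
      have h1 : ∑ s', P s a s' * (r s a s' - J + V s')
          = (∑ s', P s a s' * r s a s') - (∑ s', P s a s') * J
            + ∑ s', P s a s' * V s' := by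
        simp only [mul_sub, mul_add, Finset.sum_add_distrib, Finset.sum_sub_distrib,
          Finset.sum_mul]
      rw [h1, hP]; ring
    rw [Finset.sum_congr rfl fun a _ => hQ' a]
    rw [Finset.sum_add_distrib, Finset.sum_sub_distrib, ← Finset.sum_mul, hπ' s]
    ring
  -- performance difference lemma
  have key : ∑ s, d' s * g s = J' - J := by
    have h1 : ∑ s, d' s * g s
        = (∑ s, d' s * ∑ a, π' s a * ∑ s', P s a s' * r s a s')
          - (∑ s, d' s) * J
          + (∑ s, d' s * ∑ a, π' s a * ∑ s', P s a s' * V s')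
          - ∑ s, d' s * V s := by
      simp only [Finset.sum_mul]
      rw [← Finset.sum_sub_distrib, ← Finset.sum_add_distrib, ← Finset.sum_sub_distrib]
      apply Finset.sum_congr rfl; intro s _; rw [hgexp s]; ring
    have h2 : ∑ s, d' s * ∑ a, π' s a * ∑ s', P s a s' * V s'
        = ∑ s, d' s * V s := by
      calc ∑ s, d' s * ∑ a, π' s a * ∑ s', P s a s' * V s'
          = ∑ s, ∑ a, ∑ s', d' s * π' s a * P s a s' * V s' := by
            apply Finset.sum_congr rfl; intro s _
            rw [Finset.mul_sum]; apply Finset.sum_congr rfl; intro a _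
            rw [Finset.mul_sum, Finset.mul_sum]; apply Finset.sum_congr rfl; intro s' _
            ring
        _ = ∑ s, ∑ s', ∑ a, d' s * π' s a * P s a s' * V s' := by
            apply Finset.sum_congr rfl; intro s _; exact Finset.sum_comm
        _ = ∑ s', ∑ s, ∑ a, d' s * π' s a * P s a s' * V s' := Finset.sum_comm
        _ = ∑ s', (∑ s, d' s * ∑ a, π' s a * P s a s') * V s' := by
            apply Finset.sum_congr rfl; intro s' _
            rw [Finset.sum_mul]; apply Finset.sum_congr rfl; intro s _
            rw [Finset.mul_sum, Finset.sum_mul]; apply Finset.sum_congr rfl; intro a _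
            ring
        _ = ∑ s', d' s' * V s' := by
            apply Finset.sum_congr rfl; intro s' _; rw [hd'stat]
    rw [h1, h2, hd'sum, hJ']; ring
  -- bound the difference term
  set M : ℝ := ⨆ s, |g s| with hM
  have hbdd : BddAbove (Set.range fun s => |g s|) := (Set.finite_range _).bddAbove
  have hMle : ∀ s, |g s| ≤ M := fun s => le_ciSup hbdd s
  have hMnn : 0 ≤ M := le_trans (abs_nonneg _) (hMle Classical.ofNonempty)
  set E : ℝ := ∑ s, d s * ((1 / 2) * ∑ a, |π' s a - π s a|) with hE
  have hEnn : 0 ≤ E := by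
    apply Finset.sum_nonneg; intro s _
    apply mul_nonneg (hdnn s)
    apply mul_nonneg (by norm_num)
    exact Finset.sum_nonneg fun a _ => abs_nonneg _
  have hdiff : J' - J - ∑ s, d s * g s = ∑ s, (d' s - d s) * g s := by
    rw [← key, ← Finset.sum_sub_distrib]
    apply Finset.sum_congr rfl; intro s _; ring
  have habs : |∑ s, (d' s - d s) * g s| ≤ 2 * ν * E := by
    calc |∑ s, (d' s - d s) * g s| ≤ ∑ s, |(d' s - d s) * g s| :=
          Finset.abs_sum_le_sum_abs _ _
      _ ≤ ∑ s, |d' s - d s| * M := by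
          apply Finset.sum_le_sum; intro s _
          rw [abs_mul]
          exact mul_le_mul_of_nonneg_left (hMle s) (abs_nonneg _)
      _ = (∑ s, |d' s - d s|) * M := by rw [Finset.sum_mul]
      _ ≤ (2 * (σstar * E)) * M := by
          apply mul_le_mul_of_nonneg_right _ hMnn
          linarith [hsens]
      _ = 2 * ν * E := by rw [hν]; ring
  have h := abs_le.mp habs
  constructor <;> nlinarith [h.1, h.2, hdiff]
end

section
/- (KL bound implies performance degradation bound) Suppose for policies π_k, π_{k+1} on a finite ergodic MDP we have E_{s∼d_{π_k}}[KL(π_{k+1} ∥ π_k)[s]] ≤ δ + V, and the surrogate objective satisfies E_{s∼d_{π_k}, a∼π_{k+1}}[Ā^{π_k}(s,a)] ≥ 0. Then J(π_{k+1}) − J(π_k) ≥ −sqrt(2(δ + V)) · ν, where ν = σ^{π_{k+1}} · max_s |E_{a∼π_{k+1}}[Ā^{π_k}(s,a)]| and σ^{π_{k+1}} is a constant with D_TV(d_{π_{k+1}} ∥ d_{π_k}) ≤ σ^{π_{k+1}} E_{s∼d_{π_k}}[D_TV(π_{k+1}∥π_k)[s]]. -/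
/-!
Since `d'` is stationary for `π_{k+1}`, the average-reward performance difference identity gives
`J' - J = E_{s∼d'}[g s]` with `g s = E_{a∼π_{k+1}}[Ā(s, a)]`. Splitting `d' = d + (d' - d)`,
the `d`-part is the nonnegative surrogate and the remainder is at least
`-(sup |g|) · ‖d' - d‖₁ = -2 (sup |g|) D_TV(d' ∥ d)`. The sensitivity bound reduces this
to `σ E_{s∼d}[D_TV]`, and Pinsker's inequality `2 D_TV² ≤ KL` at each state together with
Jensen's inequality over `d` bounds `2 E_{s∼d}[D_TV]` by `√(2 E_{s∼d}[KL])`.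
-/

open Finset Set InformationTheory

lemma isMinOn_Ici_of_hasDerivAt {f f' : ℝ → ℝ} {a c : ℝ} (hac : a ≤ c)
    (hf : ContinuousOn f (Ici a)) (hd : ∀ x ∈ Ioi a, HasDerivAt f (f' x) x)
    (hsign : ∀ x ∈ Ioi a, 0 ≤ (x - c) * f' x) : IsMinOn f (Ici a) c := by
  intro x hx
  rcases le_total x c with hxc | hcx
  · have hanti : AntitoneOn f (Icc a c) := by
      refine antitoneOn_of_hasDerivWithinAt_nonpos (f' := f') (convex_Icc a c)
        (hf.mono Icc_subset_Ici_self) (fun y hy => ?_) fun y hy => ?_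
      all_goals rw [interior_Icc] at hy
      · exact (hd y hy.1).hasDerivWithinAt
      · nlinarith [hsign y hy.1, hy.2]
    exact hanti ⟨hx, hxc⟩ ⟨hac, le_rfl⟩ hxc
  · have hmono : MonotoneOn f (Ici c) := by
      refine monotoneOn_of_hasDerivWithinAt_nonneg (f' := f') (convex_Ici c)
        (hf.mono (Ici_subset_Ici.2 hac)) (fun y hy => ?_) fun y hy => ?_
      all_goals rw [interior_Ici] at hy
      · exact (hd y (hac.trans_lt hy)).hasDerivWithinAt
      · nlinarith [hsign y (hac.trans_lt hy), mem_Ioi.1 hy]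
    exact hmono self_mem_Ici hcx hcx

lemma sub_one_mul_log_sub_nonneg {x : ℝ} (hx : 0 < x) :
    0 ≤ (x - 1) * ((x + 1) * Real.log x - 2 * (x - 1)) := by
  have hderiv : ∀ y ∈ Ioi (0 : ℝ), HasDerivAt (fun x => (x + 1) * Real.log x - 2 * (x - 1))
      (Real.log y + 1 + y⁻¹ - 2) y := fun y hy => by
    have hy0 : y ≠ 0 := (mem_Ioi.1 hy).ne'
    refine ((((hasDerivAt_id' y).add_const 1).mul (Real.hasDerivAt_log hy0)).sub
      (((hasDerivAt_id' y).sub_const 1).const_mul 2)).congr_deriv ?_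
    field_simp
    ring
  have hmono : MonotoneOn (fun x => (x + 1) * Real.log x - 2 * (x - 1)) (Ioi 0) := by
    refine monotoneOn_of_hasDerivWithinAt_nonneg (f' := fun y => Real.log y + 1 + y⁻¹ - 2)
      (convex_Ioi 0) (fun y hy => (hderiv y hy).continuousAt.continuousWithinAt)
      (fun y hy => ?_) fun y hy => ?_
    all_goals rw [interior_Ioi] at hy
    · exact (hderiv y hy).hasDerivWithinAt
    · linarith [Real.one_sub_inv_le_log_of_pos (mem_Ioi.1 hy)]
  rcases le_total x 1 with h | h
  · have := hmono hx (mem_Ioi.2 one_pos) h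
    simp only [Real.log_one] at this
    nlinarith
  · have := hmono (mem_Ioi.2 one_pos) hx h
    simp only [Real.log_one] at this
    nlinarith

-- The pointwise inequality behind the classical proof of Pinsker's inequality.
lemma three_mul_sq_sub_one_le_klFun {x : ℝ} (hx : 0 ≤ x) :
    3 * (x - 1) ^ 2 ≤ 2 * (x + 2) * klFun x := by
  have hmin : IsMinOn (fun x => 2 * (x + 2) * klFun x - 3 * (x - 1) ^ 2) (Ici 0) 1 := by
    refine isMinOn_Ici_of_hasDerivAt
      (f' := fun y => 4 * ((y + 1) * Real.log y - 2 * (y - 1))) zero_le_one (by fun_prop)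
      (fun y hy => ?_) fun y hy => ?_
    · refine (((((hasDerivAt_id' y).add_const 2).const_mul 2).mul
        (hasDerivAt_klFun (mem_Ioi.1 hy).ne')).sub
        ((((hasDerivAt_id' y).sub_const 1).pow 2).const_mul 3)).congr_deriv ?_
      simp only [klFun_apply]
      ring
    · nlinarith [sub_one_mul_log_sub_nonneg (mem_Ioi.1 hy)]
  have := hmin (mem_Ici.2 hx)
  norm_num [klFun_one] at this
  linarith

lemma three_mul_sq_sub_le_mul_klFun {p q : ℝ} (hp : 0 ≤ p) (hq : 0 < q) :
    3 * (p - q) ^ 2 ≤ 2 * (p + 2 * q) * (p * Real.log (p / q) - p + q) := by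
  have hq0 := hq.ne'
  have hkl : q * klFun (p / q) = p * Real.log (p / q) - p + q := by
    rw [klFun_apply]
    field_simp
    ring
  calc 3 * (p - q) ^ 2 = q ^ 2 * (3 * (p / q - 1) ^ 2) := by
        field_simp
    _ ≤ q ^ 2 * (2 * (p / q + 2) * klFun (p / q)) := by
        exact mul_le_mul_of_nonneg_left (three_mul_sq_sub_one_le_klFun (div_nonneg hp hq.le))
          (sq_nonneg q)
    _ = 2 * (p + 2 * q) * (q * klFun (p / q)) := by
        field_simp
    _ = 2 * (p + 2 * q) * (p * Real.log (p / q) - p + q) := by rw [hkl]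

section FiniteDistributions

variable {ι : Type*} [Fintype ι]

lemma abs_sum_mul_le_iSup_abs_mul_sum_abs (w g : ι → ℝ) :
    |∑ i, w i * g i| ≤ (⨆ i, |g i|) * ∑ i, |w i| := by
  have hg : ∀ i, |g i| ≤ ⨆ i, |g i| := le_ciSup (Set.finite_range _).bddAbove
  calc |∑ i, w i * g i| ≤ ∑ i, |w i| * |g i| := by
        simpa only [abs_mul] using abs_sum_le_sum_abs (fun i => w i * g i) univ
    _ ≤ ∑ i, |w i| * ⨆ i, |g i| := sum_le_sum fun i _ => by gcongr; exact hg i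
    _ = (⨆ i, |g i|) * ∑ i, |w i| := by rw [← sum_mul, mul_comm]

noncomputable def tvDist (p q : ι → ℝ) : ℝ := (1 / 2) * ∑ i, |p i - q i|

noncomputable def relEntropy (p q : ι → ℝ) : ℝ := ∑ i, p i * Real.log (p i / q i)

theorem two_mul_tvDist_sq_le_relEntropy {p q : ι → ℝ} (hp : ∀ i, 0 ≤ p i)
    (hq : ∀ i, 0 < q i) (hp1 : ∑ i, p i = 1) (hq1 : ∑ i, q i = 1) :
    2 * tvDist p q ^ 2 ≤ relEntropy p q := by
  have hw : ∀ i ∈ (univ : Finset ι), 0 < p i + 2 * q i := fun i _ => by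
    linarith [hp i, hq i]
  have hw3 : ∑ i, (p i + 2 * q i) = 3 := by
    rw [sum_add_distrib, ← mul_sum, hp1, hq1]
    norm_num
  have hterm : ∀ i ∈ (univ : Finset ι), |p i - q i| ^ 2 / (p i + 2 * q i) ≤
      (2 / 3) * (p i * Real.log (p i / q i) - p i + q i) := fun i hi => by
    rw [sq_abs, div_le_iff₀ (hw i hi)]
    linarith [three_mul_sq_sub_le_mul_klFun (hp i) (hq i)]
  have hsum : ∑ i, (2 / 3) * (p i * Real.log (p i / q i) - p i + q i) =
      (2 / 3) * relEntropy p q := by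
    rw [← mul_sum, sum_add_distrib, sum_sub_distrib, hp1, hq1, relEntropy]
    ring
  have hcs := (sq_sum_div_le_sum_sq_div univ (fun i => |p i - q i|) hw).trans
    ((sum_le_sum hterm).trans hsum.le)
  rw [hw3, div_le_iff₀ three_pos] at hcs
  unfold tvDist
  linarith

lemma sq_sum_mul_le_sum_mul_sq {d f : ι → ℝ} (hd : ∀ i, 0 ≤ d i) (hd1 : ∑ i, d i = 1) :
    (∑ i, d i * f i) ^ 2 ≤ ∑ i, d i * f i ^ 2 := by
  simpa [hd1] using sum_sq_le_sum_mul_sum_of_sq_le_mul univ (fun i _ => hd i)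
    (fun i _ => mul_nonneg (hd i) (sq_nonneg (f i))) fun i _ => le_of_eq (by ring)

theorem two_mul_sum_mul_tvDist_le_sqrt {A : Type*} [Fintype A] {d : ι → ℝ}
    {p q : ι → A → ℝ} (hd : ∀ i, 0 ≤ d i) (hd1 : ∑ i, d i = 1)
    (hp : ∀ i a, 0 ≤ p i a) (hq : ∀ i a, 0 < q i a) (hp1 : ∀ i, ∑ a, p i a = 1)
    (hq1 : ∀ i, ∑ a, q i a = 1) :
    2 * ∑ i, d i * tvDist (p i) (q i) ≤
      Real.sqrt (2 * ∑ i, d i * relEntropy (p i) (q i)) := by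
  refine (le_abs_self _).trans (Real.abs_le_sqrt ?_)
  calc (2 * ∑ i, d i * tvDist (p i) (q i)) ^ 2
      = 4 * (∑ i, d i * tvDist (p i) (q i)) ^ 2 := by ring
    _ ≤ 4 * ∑ i, d i * tvDist (p i) (q i) ^ 2 := by
        gcongr
        exact sq_sum_mul_le_sum_mul_sq hd hd1
    _ ≤ 4 * ∑ i, d i * (relEntropy (p i) (q i) / 2) := by
        gcongr with i
        · exact hd i
        · linarith [two_mul_tvDist_sq_le_relEntropy (hp i) (hq i) (hp1 i) (hq1 i)]
    _ = 2 * ∑ i, d i * relEntropy (p i) (q i) := by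
        rw [mul_sum, mul_sum]
        exact sum_congr rfl fun i _ => by ring

end FiniteDistributions

section AverageReward

variable {S A : Type*} [Fintype S] [Fintype A] {P : S → A → S → ℝ} {π : S → A → ℝ}
  {d : S → ℝ}

lemma sum_mul_sum_mul_transition_eq_of_stationary
    (hd : ∀ s', ∑ s, d s * ∑ a, π s a * P s a s' = d s') (f : S → ℝ) :
    ∑ s, d s * ∑ a, π s a * ∑ s', P s a s' * f s' = ∑ s, d s * f s := by
  calc ∑ s, d s * ∑ a, π s a * ∑ s', P s a s' * f s'
      = ∑ s', (∑ s, d s * ∑ a, π s a * P s a s') * f s' := by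
        simp only [sum_mul, mul_sum]
        refine (sum_congr rfl fun s _ => sum_comm).trans (sum_comm.trans ?_)
        exact sum_congr rfl fun _ _ => sum_congr rfl fun _ _ =>
          sum_congr rfl fun _ _ => by ring
    _ = ∑ s, d s * f s := by simp only [hd]

theorem performance_difference (hP : ∀ s a, ∑ s', P s a s' = 1) (hπ : ∀ s, ∑ a, π s a = 1)
    (hd1 : ∑ s, d s = 1) (hd : ∀ s', ∑ s, d s * ∑ a, π s a * P s a s' = d s')
    (r : S → A → S → ℝ) (J : ℝ) (V : S → ℝ) :
    ∑ s, d s * ∑ a, π s a * (∑ s', P s a s' * (r s a s' - J + V s') - V s) =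
      ∑ s, d s * ∑ a, π s a * ∑ s', P s a s' * r s a s' - J := by
  have hinner : ∀ s, ∑ a, π s a * (∑ s', P s a s' * (r s a s' - J + V s') - V s) =
      ∑ a, π s a * ∑ s', P s a s' * r s a s' - J
        + ∑ a, π s a * ∑ s', P s a s' * V s' - V s :=
    fun s => by
      simp only [mul_add, mul_sub, sum_add_distrib, sum_sub_distrib, ← sum_mul, hP, hπ, one_mul]
  simp only [hinner]
  simp only [mul_add, mul_sub, sum_add_distrib, sum_sub_distrib, ← sum_mul, hd1, one_mul,
    sum_mul_sum_mul_transition_eq_of_stationary hd V]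
  ring

end AverageReward

theorem stmt_11_general {S A : Type*} [Fintype S] [Fintype A]
    (P : S → A → S → ℝ) (r : S → A → S → ℝ)
    (πk πn : S → A → ℝ) (d d' : S → ℝ)
    (hP : ∀ s a, ∑ s', P s a s' = 1)
    (hπkpos : ∀ s a, 0 < πk s a) (hπk : ∀ s, ∑ a, πk s a = 1)
    (hπnnn : ∀ s a, 0 ≤ πn s a) (hπn : ∀ s, ∑ a, πn s a = 1)
    (hdnn : ∀ s, 0 ≤ d s) (hdsum : ∑ s, d s = 1)
    (hd'sum : ∑ s, d' s = 1)
    -- d, d' stationary for the chains induced by π_k, π_{k+1}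
    (hd'stat : ∀ s', ∑ s, d' s * ∑ a, πn s a * P s a s' = d' s')
    (J J' : ℝ)
    (hJ' : J' = ∑ s, d' s * ∑ a, πn s a * ∑ s', P s a s' * r s a s')
    (V : S → ℝ)
    (Q : S → A → ℝ)
    (hQ : ∀ s a, Q s a = ∑ s', P s a s' * (r s a s' - J + V s'))
    (Adv : S → A → ℝ)
    (hA : ∀ s a, Adv s a = Q s a - V s)
    (σ ν δ Vmax : ℝ) (hσnn : 0 ≤ σ)
    (hν : ν = σ * ⨆ s, |∑ a, πn s a * Adv s a|)
    -- sensitivity bound D_TV(d_{π_{k+1}}∥d_{π_k}) ≤ σ E_{s∼d}[D_TV(π_{k+1}∥π_k)[s]]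
    (hsens : (1 / 2) * ∑ s, |d' s - d s| ≤
      σ * ∑ s, d s * ((1 / 2) * ∑ a, |πn s a - πk s a|))
    -- expected KL bound
    (hKL : ∑ s, d s * ∑ a, πn s a * Real.log (πn s a / πk s a) ≤ δ + Vmax)
    -- surrogate objective nonnegative
    (hsurr : 0 ≤ ∑ s, d s * ∑ a, πn s a * Adv s a) :
    J' - J ≥ -(Real.sqrt (2 * (δ + Vmax)) * ν) := by
  set g : S → ℝ := fun s => ∑ a, πn s a * Adv s a
  set M : ℝ := ⨆ s, |g s|
  have hM : 0 ≤ M := Real.iSup_nonneg fun s => abs_nonneg _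
  have hgap : J' - J = ∑ s, d s * g s + ∑ s, (d' s - d s) * g s := by
    rw [hJ', ← performance_difference hP hπn hd'sum hd'stat r J V, ← sum_add_distrib]
    exact sum_congr rfl fun s _ => by simp only [g, hA, hQ]; ring
  have hshift : -(M * (2 * tvDist d' d)) ≤ ∑ s, (d' s - d s) * g s := by
    have := abs_sum_mul_le_iSup_abs_mul_sum_abs (fun s => d' s - d s) g
    rw [tvDist]
    linarith [neg_abs_le (∑ s, (d' s - d s) * g s)]
  have hsens' : tvDist d' d ≤ σ * ∑ s, d s * tvDist (πn s) (πk s) := hsens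
  have hdist : 2 * tvDist d' d ≤ σ * Real.sqrt (2 * (δ + Vmax)) :=
    calc 2 * tvDist d' d ≤ σ * (2 * ∑ s, d s * tvDist (πn s) (πk s)) := by
          linarith
      _ ≤ σ * Real.sqrt (2 * ∑ s, d s * relEntropy (πn s) (πk s)) := by
          gcongr
          exact two_mul_sum_mul_tvDist_le_sqrt hdnn hdsum hπnnn hπkpos hπn hπk
      _ ≤ σ * Real.sqrt (2 * (δ + Vmax)) := by
          gcongr
          exact hKL
  calc -(Real.sqrt (2 * (δ + Vmax)) * ν) = -(M * (σ * Real.sqrt (2 * (δ + Vmax)))) := by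
        rw [hν]; ring
    _ ≤ -(M * (2 * tvDist d' d)) := by gcongr
    _ ≤ J' - J := by linarith

/-- KL bound implies performance degradation bound:
if `E_{s∼d_{π_k}}[KL(π_{k+1}∥π_k)[s]] ≤ δ + V` and the surrogate objective is
nonnegative, then `J(π_{k+1}) − J(π_k) ≥ −sqrt(2(δ+V))·ν` with
`ν = σ·max_s |E_{a∼π_{k+1}}[Ā^{π_k}(s,a)]|`, where `σ` satisfies the
stationary-distribution sensitivity bound. -/
theorem stmt_11 {S A : Type*} [Fintype S] [Fintype A] [Nonempty S]
    (P : S → A → S → ℝ) (r : S → A → S → ℝ)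
    (πk πn : S → A → ℝ) (d d' : S → ℝ)
    (hPnn : ∀ s a s', 0 ≤ P s a s') (hP : ∀ s a, ∑ s', P s a s' = 1)
    (hπkpos : ∀ s a, 0 < πk s a) (hπk : ∀ s, ∑ a, πk s a = 1)
    (hπnnn : ∀ s a, 0 ≤ πn s a) (hπn : ∀ s, ∑ a, πn s a = 1)
    (hdnn : ∀ s, 0 ≤ d s) (hdsum : ∑ s, d s = 1)
    (hd'nn : ∀ s, 0 ≤ d' s) (hd'sum : ∑ s, d' s = 1)
    -- d, d' stationary for the chains induced by π_k, π_{k+1}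
    (hdstat : ∀ s', ∑ s, d s * ∑ a, πk s a * P s a s' = d s')
    (hd'stat : ∀ s', ∑ s, d' s * ∑ a, πn s a * P s a s' = d' s')
    (J J' : ℝ)
    (hJ' : J' = ∑ s, d' s * ∑ a, πn s a * ∑ s', P s a s' * r s a s')
    (V : S → ℝ)
    (hV : ∀ s, V s = ∑ a, πk s a * ∑ s', P s a s' * (r s a s' - J + V s'))
    (Q : S → A → ℝ)
    (hQ : ∀ s a, Q s a = ∑ s', P s a s' * (r s a s' - J + V s'))
    (Adv : S → A → ℝ)
    (hA : ∀ s a, Adv s a = Q s a - V s)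
    (σ ν δ Vmax : ℝ) (hσnn : 0 ≤ σ)
    (hν : ν = σ * ⨆ s, |∑ a, πn s a * Adv s a|)
    -- sensitivity bound D_TV(d_{π_{k+1}}∥d_{π_k}) ≤ σ E_{s∼d}[D_TV(π_{k+1}∥π_k)[s]]
    (hsens : (1 / 2) * ∑ s, |d' s - d s| ≤
      σ * ∑ s, d s * ((1 / 2) * ∑ a, |πn s a - πk s a|))
    -- expected KL bound
    (hKL : ∑ s, d s * ∑ a, πn s a * Real.log (πn s a / πk s a) ≤ δ + Vmax)
    -- surrogate objective nonnegative
    (hsurr : 0 ≤ ∑ s, d s * ∑ a, πn s a * Adv s a) :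
    J' - J ≥ -(Real.sqrt (2 * (δ + Vmax)) * ν) :=
  stmt_11_general P r πk πn d d' hP hπkpos hπk hπnnn hπn hdnn hdsum hd'sum hd'stat J J' hJ' V Q hQ
    Adv hA σ ν δ Vmax hσnn hν hsens hKL hsurr
end

section
/- (Constraint violation bound) Under the same KL bound E_{s∼d_{π_k}}[KL(π_{k+1}∥π_k)[s]] ≤ δ + V and the constraint satisfaction of the surrogate J_C(π_k) + E_{s∼d_{π_k},a∼π_{k+1}}[Ā_C^{π_k}(s,a)] ≤ l, we have J_C(π_{k+1}) ≤ l + sqrt(2(δ + V)) · ν_C, where ν_C = σ^{π_{k+1}} max_s |E_{a∼π_{k+1}}[Ā_C^{π_k}(s,a)]|. -/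
/-!
By the performance difference identity, `J_C(π_{k+1}) - J_C(π_k)` is the average of the
expected advantage `Ā(s) = E_{a∼π_{k+1}}[Ā_C^{π_k}(s,a)]` under the *new* stationary distribution
`d'`. Replacing `d'` by `d` costs at most `‖d' - d‖₁ · max_s |Ā(s)|`, and the sensitivity
hypothesis bounds `‖d' - d‖₁` by `2σ E_d[D_TV(π_{k+1}‖π_k)]`. Pinsker's inequality
`D_TV² ≤ KL / 2` at each state and Jensen's inequality over `d` turn this into
`2σ √(E_d[KL] / 2) ≤ σ √(2(δ + V))`, while the remaining term is the surrogate, at most `l`.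
-/

open Finset InformationTheory

lemma hasDerivAt_add_one_mul_log_sub_two_mul {t : ℝ} (ht : t ≠ 0) :
    HasDerivAt (fun t => (t + 1) * Real.log t - 2 * (t - 1)) (Real.log t + t⁻¹ - 1) t := by
  have hlin : HasDerivAt (fun t : ℝ => 2 * (t - 1)) 2 t := by
    simpa using ((hasDerivAt_id' t).sub_const 1).const_mul 2
  refine ((((hasDerivAt_id' t).add_const 1).mul (Real.hasDerivAt_log ht)).sub hlin).congr_deriv ?_
  field_simp
  ring

lemma monotoneOn_add_one_mul_log_sub_two_mul :
    MonotoneOn (fun t : ℝ => (t + 1) * Real.log t - 2 * (t - 1)) (Set.Ioi 0) := by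
  refine monotoneOn_of_hasDerivWithinAt_nonneg (f' := fun t => Real.log t + t⁻¹ - 1)
    (convex_Ioi 0) (fun t ht => ?_) (fun t ht => ?_) (fun t ht => ?_)
  · exact (hasDerivAt_add_one_mul_log_sub_two_mul (ne_of_gt ht)).continuousAt.continuousWithinAt
  · rw [interior_Ioi] at ht
    exact (hasDerivAt_add_one_mul_log_sub_two_mul (ne_of_gt ht)).hasDerivWithinAt
  · rw [interior_Ioi] at ht
    have := Real.log_le_sub_one_of_pos (inv_pos.2 ht)
    rw [Real.log_inv] at this
    show 0 ≤ Real.log t + t⁻¹ - 1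
    linarith

lemma hasDerivAt_mul_klFun_sub_sq {t : ℝ} (ht : t ≠ 0) :
    HasDerivAt (fun t => 2 * (t + 2) * klFun t - 3 * (t - 1) ^ 2)
      (4 * ((t + 1) * Real.log t - 2 * (t - 1))) t := by
  have hlin : HasDerivAt (fun t : ℝ => 2 * (t + 2)) 2 t := by
    simpa using ((hasDerivAt_id t).add_const 2).const_mul 2
  have hsq : HasDerivAt (fun t : ℝ => 3 * (t - 1) ^ 2) (3 * (2 * (t - 1))) t := by
    simpa using (((hasDerivAt_id t).sub_const 1).pow 2).const_mul 3
  refine ((hlin.mul (hasDerivAt_klFun ht)).sub hsq).congr_deriv ?_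
  rw [klFun_apply]
  ring

/-- The derivative of the gap `2 (t + 2) klFun t - 3 (t - 1)²` is `4 g t`, where
`g t = (t + 1) log t - 2 (t - 1)` is increasing and vanishes at `1`; so the gap is minimal
at `1`. -/
lemma three_mul_sub_one_sq_le_klFun {t : ℝ} (ht : 0 ≤ t) :
    3 * (t - 1) ^ 2 ≤ 2 * (t + 2) * klFun t := by
  set f := fun t => 2 * (t + 2) * klFun t - 3 * (t - 1) ^ 2 with hf
  set g := fun t : ℝ => (t + 1) * Real.log t - 2 * (t - 1)
  have hcont : Continuous f := by rw [hf]; fun_prop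
  have hf1 : f 1 = 0 := by simp [hf, klFun_one]
  suffices 0 ≤ f t by simpa [hf, sub_nonneg] using this
  rcases le_total 1 t with h1 | h1
  · have hmono : MonotoneOn f (Set.Ici 1) := by
      refine monotoneOn_of_hasDerivWithinAt_nonneg (f' := fun x => 4 * g x) (convex_Ici 1)
        hcont.continuousOn (fun x hx => ?_) (fun x hx => ?_)
      all_goals rw [interior_Ici] at hx
      · exact (hasDerivAt_mul_klFun_sub_sq (by linarith [hx.out])).hasDerivWithinAt
      · have := monotoneOn_add_one_mul_log_sub_two_mul (Set.mem_Ioi.2 one_pos)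
          (Set.mem_Ioi.2 (one_pos.trans hx)) hx.out.le
        simp only [Real.log_one] at this
        linarith
    simpa [hf1] using hmono (Set.mem_Ici.2 le_rfl) h1 h1
  · have hanti : AntitoneOn f (Set.Icc 0 1) := by
      refine antitoneOn_of_hasDerivWithinAt_nonpos (f' := fun x => 4 * g x) (convex_Icc 0 1)
        hcont.continuousOn (fun x hx => ?_) (fun x hx => ?_)
      all_goals rw [interior_Icc] at hx
      · exact (hasDerivAt_mul_klFun_sub_sq hx.1.ne').hasDerivWithinAt
      · have := monotoneOn_add_one_mul_log_sub_two_mul (Set.mem_Ioi.2 hx.1)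
          (Set.mem_Ioi.2 one_pos) hx.2.le
        simp only [Real.log_one] at this
        linarith
    simpa [hf1] using hanti ⟨ht, h1⟩ ⟨zero_le_one, le_rfl⟩ h1

lemma three_mul_sub_sq_le {x y : ℝ} (hx : 0 ≤ x) (hy : 0 < y) :
    3 * (x - y) ^ 2 ≤ 2 * (x + 2 * y) * (x * Real.log (x / y) - x + y) := by
  have key := three_mul_sub_one_sq_le_klFun (div_nonneg hx hy.le)
  rw [klFun_apply] at key
  calc 3 * (x - y) ^ 2 = y ^ 2 * (3 * (x / y - 1) ^ 2) := by field_simp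
    _ ≤ y ^ 2 * (2 * (x / y + 2) * (x / y * Real.log (x / y) + 1 - x / y)) := by gcongr
    _ = 2 * (x + 2 * y) * (x * Real.log (x / y) - x + y) := by field_simp; ring

section FiniteDistributions

variable {ι S A : Type*} [Fintype S] [Fintype A]

noncomputable def totalVariation (p q : A → ℝ) : ℝ := 1 / 2 * ∑ a, |p a - q a|

noncomputable def klDivergence (p q : A → ℝ) : ℝ := ∑ a, p a * Real.log (p a / q a)

/-- Pinsker's inequality: Sedrakyan's lemma with the weights `p a + 2 q a`, which sum to `3`,
reduces it to the pointwise bound `three_mul_sub_sq_le`. -/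
theorem totalVariation_sq_le_klDivergence_div_two {p q : A → ℝ} (hp : ∀ a, 0 ≤ p a)
    (hq : ∀ a, 0 < q a) (hp1 : ∑ a, p a = 1) (hq1 : ∑ a, q a = 1) :
    totalVariation p q ^ 2 ≤ klDivergence p q / 2 := by
  have hw : ∀ a ∈ univ, 0 < p a + 2 * q a := fun a _ => by linarith [hp a, hq a]
  have hw3 : ∑ a, (p a + 2 * q a) = 3 := by
    rw [sum_add_distrib, ← mul_sum, hp1, hq1]; norm_num
  have hterm : ∀ a ∈ univ, |p a - q a| ^ 2 / (p a + 2 * q a) ≤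
      2 / 3 * (p a * Real.log (p a / q a) - p a + q a) := fun a ha => by
    rw [div_le_iff₀ (hw a ha), sq_abs]
    linarith [three_mul_sub_sq_le (hp a) (hq a)]
  have hsum : ∑ a, (p a * Real.log (p a / q a) - p a + q a) = klDivergence p q := by
    rw [sum_add_distrib, sum_sub_distrib, hp1, hq1, klDivergence]; ring
  have := (sq_sum_div_le_sum_sq_div univ (fun a => |p a - q a|) hw).trans (sum_le_sum hterm)
  rw [hw3, ← mul_sum, hsum] at this
  rw [totalVariation]
  linarith

lemma sq_sum_mul_le_sum_mul_sq_s12 (s : Finset ι) {w : ι → ℝ} (hw : ∀ i ∈ s, 0 ≤ w i)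
    (hw1 : ∑ i ∈ s, w i = 1) (x : ι → ℝ) :
    (∑ i ∈ s, w i * x i) ^ 2 ≤ ∑ i ∈ s, w i * x i ^ 2 := by
  have := sum_sq_le_sum_mul_sum_of_sq_le_mul s hw
    (fun i hi => mul_nonneg (hw i hi) (sq_nonneg (x i)))
    (fun i _ => (by ring : (w i * x i) ^ 2 = w i * (w i * x i ^ 2)).le)
  rwa [hw1, one_mul] at this

theorem sum_mul_totalVariation_le_sqrt {w : S → ℝ} (hw : ∀ s, 0 ≤ w s) (hw1 : ∑ s, w s = 1)
    {p q : S → A → ℝ} (hp : ∀ s a, 0 ≤ p s a) (hq : ∀ s a, 0 < q s a)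
    (hp1 : ∀ s, ∑ a, p s a = 1) (hq1 : ∀ s, ∑ a, q s a = 1) :
    ∑ s, w s * totalVariation (p s) (q s) ≤
      Real.sqrt ((∑ s, w s * klDivergence (p s) (q s)) / 2) := by
  refine (le_abs_self _).trans (Real.abs_le_sqrt ?_)
  refine (sq_sum_mul_le_sum_mul_sq_s12 univ (fun s _ => hw s) hw1 _).trans ?_
  rw [sum_div]
  gcongr with s
  rw [mul_div_assoc]
  exact mul_le_mul_of_nonneg_left
    (totalVariation_sq_le_klDivergence_div_two (hp s) (hq s) (hp1 s) (hq1 s)) (hw s)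

lemma sum_mul_le_sum_abs_mul_iSup_abs (u f : S → ℝ) :
    ∑ s, u s * f s ≤ (∑ s, |u s|) * ⨆ s, |f s| := by
  rw [sum_mul]
  refine sum_le_sum fun s _ => ?_
  calc u s * f s ≤ |u s| * |f s| := (le_abs_self _).trans (abs_mul _ _).le
    _ ≤ |u s| * ⨆ s, |f s| :=
      mul_le_mul_of_nonneg_left (le_ciSup (Set.finite_range fun s => |f s|).bddAbove s)
        (abs_nonneg _)

end FiniteDistributions

section AverageCost

variable {S A : Type*} [Fintype S] [Fintype A] {P : S → A → S → ℝ} {μ : S → A → ℝ} {d : S → ℝ}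

lemma sum_stationary_mul_sum_transition
    (hstat : ∀ s', ∑ s, d s * ∑ a, μ s a * P s a s' = d s') (f : S → ℝ) :
    ∑ s, d s * ∑ a, μ s a * ∑ s', P s a s' * f s' = ∑ s, d s * f s := by
  calc ∑ s, d s * ∑ a, μ s a * ∑ s', P s a s' * f s'
      = ∑ s' : S, (∑ s, d s * ∑ a, μ s a * P s a s') * f s' := by
        simp only [mul_sum, sum_mul, mul_assoc]
        exact (sum_congr rfl fun s _ => sum_comm).trans sum_comm
    _ = ∑ s, d s * f s := by simp only [hstat]

theorem sum_stationary_mul_advantage_eq (hP : ∀ s a, ∑ s', P s a s' = 1)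
    (hμ : ∀ s, ∑ a, μ s a = 1) (hd : ∑ s, d s = 1)
    (hstat : ∀ s', ∑ s, d s * ∑ a, μ s a * P s a s' = d s')
    {c : S → A → S → ℝ} {J : ℝ} {V : S → ℝ} {Adv : S → A → ℝ}
    (hAdv : ∀ s a, Adv s a = ∑ s', P s a s' * (c s a s' - J + V s') - V s) :
    ∑ s, d s * ∑ a, μ s a * Adv s a =
      (∑ s, d s * ∑ a, μ s a * ∑ s', P s a s' * c s a s') - J := by
  have hrow : ∀ s, ∑ a, μ s a * Adv s a = (∑ a, μ s a * ∑ s', P s a s' * c s a s') - J +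
      (∑ a, μ s a * ∑ s', P s a s' * V s') - V s := by
    intro s
    simp only [hAdv, mul_add, mul_sub, sum_add_distrib, sum_sub_distrib, ← sum_mul, hP, hμ,
      one_mul]
  simp only [hrow, mul_add, mul_sub, sum_add_distrib, sum_sub_distrib, ← sum_mul, hd, one_mul,
    sum_stationary_mul_sum_transition hstat]
  ring

end AverageCost

theorem stmt_12_general {S A : Type*} [Fintype S] [Fintype A]
    (P : S → A → S → ℝ) (Cost : S → A → S → ℝ)
    (πk πn : S → A → ℝ) (d d' : S → ℝ)
    (hP : ∀ s a, ∑ s', P s a s' = 1)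
    (hπkpos : ∀ s a, 0 < πk s a) (hπk : ∀ s, ∑ a, πk s a = 1)
    (hπnnn : ∀ s a, 0 ≤ πn s a) (hπn : ∀ s, ∑ a, πn s a = 1)
    (hdnn : ∀ s, 0 ≤ d s) (hdsum : ∑ s, d s = 1)
    (hd'sum : ∑ s, d' s = 1)
    -- d, d' stationary for the chains induced by π_k, π_{k+1}
    (hd'stat : ∀ s', ∑ s, d' s * ∑ a, πn s a * P s a s' = d' s')
    (JC JC' : ℝ)
    -- average costs of π_k and π_{k+1}
    (hJC' : JC' = ∑ s, d' s * ∑ a, πn s a * ∑ s', P s a s' * Cost s a s')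
    (VC : S → ℝ)
    (QC : S → A → ℝ)
    (hQC : ∀ s a, QC s a = ∑ s', P s a s' * (Cost s a s' - JC + VC s'))
    (AdvC : S → A → ℝ)
    (hAC : ∀ s a, AdvC s a = QC s a - VC s)
    (σ νC δ Vmax l : ℝ) (hσnn : 0 ≤ σ)
    (hνC : νC = σ * ⨆ s, |∑ a, πn s a * AdvC s a|)
    (hsens : (1 / 2) * ∑ s, |d' s - d s| ≤
      σ * ∑ s, d s * ((1 / 2) * ∑ a, |πn s a - πk s a|))
    (hKL : ∑ s, d s * ∑ a, πn s a * Real.log (πn s a / πk s a) ≤ δ + Vmax)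
    -- surrogate constraint satisfaction
    (hsurr : JC + ∑ s, d s * ∑ a, πn s a * AdvC s a ≤ l) :
    JC' ≤ l + Real.sqrt (2 * (δ + Vmax)) * νC := by
  set M := ⨆ s, |∑ a, πn s a * AdvC s a|
  have hperf : JC' - JC = ∑ s, d' s * ∑ a, πn s a * AdvC s a := by
    have hadv : ∀ s a, AdvC s a = ∑ s', P s a s' * (Cost s a s' - JC + VC s') - VC s :=
      fun s a => by rw [hAC, hQC]
    rw [sum_stationary_mul_advantage_eq hP hπn hd'sum hd'stat hadv, hJC']
  have hshift : ∑ s, d' s * ∑ a, πn s a * AdvC s a - ∑ s, d s * ∑ a, πn s a * AdvC s a ≤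
      (∑ s, |d' s - d s|) * M := by
    rw [← sum_sub_distrib]
    simp_rw [← sub_mul]
    exact sum_mul_le_sum_abs_mul_iSup_abs _ _
  have hdist : ∑ s, |d' s - d s| ≤ σ * Real.sqrt (2 * (δ + Vmax)) := by
    have hexp : ∑ s, d s * totalVariation (πn s) (πk s) ≤ Real.sqrt ((δ + Vmax) / 2) :=
      (sum_mul_totalVariation_le_sqrt hdnn hdsum hπnnn hπkpos hπn hπk).trans
        (Real.sqrt_le_sqrt (div_le_div_of_nonneg_right hKL zero_le_two))
    have hsqrt : Real.sqrt (2 * (δ + Vmax)) = 2 * Real.sqrt ((δ + Vmax) / 2) := by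
      rw [show 2 * (δ + Vmax) = 2 ^ 2 * ((δ + Vmax) / 2) by ring, Real.sqrt_mul (by positivity),
        Real.sqrt_sq zero_le_two]
    calc ∑ s, |d' s - d s| = 2 * totalVariation d' d := by rw [totalVariation]; ring
      _ ≤ 2 * (σ * ∑ s, d s * totalVariation (πn s) (πk s)) := by gcongr; exact hsens
      _ ≤ 2 * (σ * Real.sqrt ((δ + Vmax) / 2)) := by gcongr
      _ = σ * Real.sqrt (2 * (δ + Vmax)) := by rw [hsqrt]; ring
  have hM : 0 ≤ M := Real.iSup_nonneg fun s => abs_nonneg _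
  calc JC' = (JC + ∑ s, d s * ∑ a, πn s a * AdvC s a) +
        (∑ s, d' s * ∑ a, πn s a * AdvC s a - ∑ s, d s * ∑ a, πn s a * AdvC s a) := by linarith
    _ ≤ l + σ * Real.sqrt (2 * (δ + Vmax)) * M :=
        add_le_add hsurr (hshift.trans (mul_le_mul_of_nonneg_right hdist hM))
    _ = l + Real.sqrt (2 * (δ + Vmax)) * νC := by rw [hνC]; ring

/-- Constraint violation bound: under the expected-KL bound
`E_{s∼d_{π_k}}[KL(π_{k+1}∥π_k)[s]] ≤ δ + V` and surrogate constraint satisfaction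
`J_C(π_k) + E_{s∼d_{π_k},a∼π_{k+1}}[Ā_C^{π_k}] ≤ l`, the updated policy satisfies
`J_C(π_{k+1}) ≤ l + sqrt(2(δ+V))·ν_C`. -/
theorem stmt_12 {S A : Type*} [Fintype S] [Fintype A] [Nonempty S]
    (P : S → A → S → ℝ) (Cost : S → A → S → ℝ)
    (πk πn : S → A → ℝ) (d d' : S → ℝ)
    (hPnn : ∀ s a s', 0 ≤ P s a s') (hP : ∀ s a, ∑ s', P s a s' = 1)
    (hπkpos : ∀ s a, 0 < πk s a) (hπk : ∀ s, ∑ a, πk s a = 1)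
    (hπnnn : ∀ s a, 0 ≤ πn s a) (hπn : ∀ s, ∑ a, πn s a = 1)
    (hdnn : ∀ s, 0 ≤ d s) (hdsum : ∑ s, d s = 1)
    (hd'nn : ∀ s, 0 ≤ d' s) (hd'sum : ∑ s, d' s = 1)
    -- d, d' stationary for the chains induced by π_k, π_{k+1}
    (hdstat : ∀ s', ∑ s, d s * ∑ a, πk s a * P s a s' = d s')
    (hd'stat : ∀ s', ∑ s, d' s * ∑ a, πn s a * P s a s' = d' s')
    (JC JC' : ℝ)
    -- average costs of π_k and π_{k+1}
    (hJC : JC = ∑ s, d s * ∑ a, πk s a * ∑ s', P s a s' * Cost s a s')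
    (hJC' : JC' = ∑ s, d' s * ∑ a, πn s a * ∑ s', P s a s' * Cost s a s')
    (VC : S → ℝ)
    -- average-cost Bellman equation for the cost bias of π_k
    (hVC : ∀ s, VC s = ∑ a, πk s a * ∑ s', P s a s' * (Cost s a s' - JC + VC s'))
    (QC : S → A → ℝ)
    (hQC : ∀ s a, QC s a = ∑ s', P s a s' * (Cost s a s' - JC + VC s'))
    (AdvC : S → A → ℝ)
    (hAC : ∀ s a, AdvC s a = QC s a - VC s)
    (σ νC δ Vmax l : ℝ) (hσnn : 0 ≤ σ)
    (hνC : νC = σ * ⨆ s, |∑ a, πn s a * AdvC s a|)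
    (hsens : (1 / 2) * ∑ s, |d' s - d s| ≤
      σ * ∑ s, d s * ((1 / 2) * ∑ a, |πn s a - πk s a|))
    (hKL : ∑ s, d s * ∑ a, πn s a * Real.log (πn s a / πk s a) ≤ δ + Vmax)
    -- surrogate constraint satisfaction
    (hsurr : JC + ∑ s, d s * ∑ a, πn s a * AdvC s a ≤ l) :
    JC' ≤ l + Real.sqrt (2 * (δ + Vmax)) * νC :=
  stmt_12_general P Cost πk πn d d' hP hπkpos hπk hπnnn hπn hdnn hdsum hd'sum hd'stat JC JC' hJC' VC
    QC hQC AdvC hAC σ νC δ Vmax l hσnn hνC hsens hKL hsurr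
end
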